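/- The matrix D is symmetric positive definite. -/

import Mathlib

/-!
Writing `G` for the difference operator that sends the values at the `n` interior nodes
(extended by zero at the two boundary nodes) to the `n + 1` increments between neighbouring nodes,
`D = (1 / (2 h²)) • G Gᵀ + diag v`. The Gram matrix `G Gᵀ` is positive definite because `G` has
full row rank: its first `n` columns form a unitriangular matrix. Adding `diag v ≥ 0` keeps it so.
-/

open Matrix

/-- Row `j` is `e_j - e_{j+1}`, so `(x ᵥ* diffMatrix R n) k = x_k - x_{k-1}` with `x_{-1} = x_n = 0`. -/
def diffMatrix (R : Type*) [Ring R] (n : ℕ) : Matrix (Fin n) (Fin (n + 1)) R :=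
  of fun j => Pi.single j.castSucc 1 - Pi.single j.succ 1

section

variable {R : Type*}

theorem diffMatrix_row [Ring R] {n : ℕ} (i : Fin n) :
    diffMatrix R n i = Pi.single i.castSucc 1 - Pi.single i.succ 1 :=
  rfl

theorem diffMatrix_mul_transpose_apply [Ring R] {n : ℕ} (i j : Fin n) :
    (diffMatrix R n * (diffMatrix R n)ᵀ) i j =
      (if i = j then 2 else 0) - (if (i : ℕ) = j + 1 then 1 else 0)
        - (if (j : ℕ) = i + 1 then 1 else 0) := by
  simp only [mul_apply', transpose_apply, diffMatrix_row, sub_dotProduct, single_dotProduct,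
    one_mul, Pi.sub_apply, Pi.single_apply, Fin.ext_iff, Fin.val_castSucc, Fin.val_succ]
  split_ifs <;> first | omega | norm_num

theorem isUpperTriangular_diffMatrix_submatrix_castSucc [Ring R] (n : ℕ) :
    ((diffMatrix R n).submatrix id Fin.castSucc).IsUpperTriangular := by
  intro i j (hij : j < i)
  simp only [submatrix_apply, id_eq, diffMatrix, of_apply, Pi.sub_apply, Pi.single_apply,
    Fin.ext_iff, Fin.val_castSucc, Fin.val_succ]
  split_ifs <;> first | omega | simp

theorem vecMul_diffMatrix_injective [CommRing R] (n : ℕ) :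
    Function.Injective (diffMatrix R n).vecMul := by
  set S := (diffMatrix R n).submatrix id Fin.castSucc
  have hdet : S.det = 1 := by
    rw [det_of_isUpperTriangular (isUpperTriangular_diffMatrix_submatrix_castSucc n)]
    refine Finset.prod_eq_one fun i _ => ?_
    simp [diffMatrix, Fin.ext_iff]
  have hS : Function.Injective S.vecMul :=
    vecMul_injective_of_isUnit <| (isUnit_iff_isUnit_det S).2 (hdet ▸ isUnit_one)
  exact fun x y hxy => hS (congrArg (· ∘ Fin.castSucc) hxy)

end

theorem posDef_diffMatrix_mul_transpose (n : ℕ) :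
    (diffMatrix ℝ n * (diffMatrix ℝ n)ᵀ).PosDef := by
  rw [← conjTranspose_eq_transpose_of_trivial]
  exact PosDef.mul_conjTranspose_self _ (vecMul_diffMatrix_injective n)

theorem eq_smul_diffMatrix_mul_transpose_add_diagonal {n : ℕ} {h : ℝ} {v : Fin n → ℝ}
    {D : Matrix (Fin n) (Fin n) ℝ} (hdiag : ∀ i : Fin n, D i i = 1 / h ^ 2 + v i)
    (hoff : ∀ i j : Fin n, |(i : ℤ) - (j : ℤ)| = 1 → D i j = -(1 / (2 * h ^ 2)))
    (hzero : ∀ i j : Fin n, 2 ≤ |(i : ℤ) - (j : ℤ)| → D i j = 0) :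
    D = (1 / (2 * h ^ 2)) • (diffMatrix ℝ n * (diffMatrix ℝ n)ᵀ) + diagonal v := by
  ext i j
  rw [Matrix.add_apply, Matrix.smul_apply, diffMatrix_mul_transpose_apply, diagonal_apply,
    smul_eq_mul]
  obtain rfl | hne := eq_or_ne i j
  · rw [hdiag]
    split_ifs <;> first | omega | ring
  rw [if_neg hne, if_neg hne]
  by_cases hadj : (i : ℕ) = j + 1 ∨ (j : ℕ) = i + 1
  · rw [hoff i j (by rw [abs_eq zero_le_one]; omega)]
    split_ifs <;> first | omega | ring
  · rw [hzero i j (le_abs'.2 (by omega))]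
    split_ifs <;> first | omega | ring

theorem stmt_0 (n : ℕ) (h : ℝ) (hh : 0 < h)
    (v : Fin n → ℝ) (hv : ∀ i, 0 ≤ v i)
    (D : Matrix (Fin n) (Fin n) ℝ)
    (hDdiag : ∀ i : Fin n, D i i = 1 / h ^ 2 + v i)
    (hDoff : ∀ i j : Fin n, |(i : ℤ) - (j : ℤ)| = 1 → D i j = -(1 / (2 * h ^ 2)))
    (hDzero : ∀ i j : Fin n, 2 ≤ |(i : ℤ) - (j : ℤ)| → D i j = 0) :
    D.IsSymm ∧ D.PosDef := by
  have hD : D.PosDef := by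
    rw [eq_smul_diffMatrix_mul_transpose_add_diagonal hDdiag hDoff hDzero]
    exact ((posDef_diffMatrix_mul_transpose n).smul (by positivity)).add_posSemidef
      (.diagonal hv)
  exact ⟨isHermitian_iff_isSymm.1 hD.isHermitian, hD⟩
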